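/- arXiv:2405.07926 — 7 statements merged into one kernel-verified Lean document; each statement's English description precedes it below -/
import Mathlib

section
/- Let f be μ-strongly convex and differentiable on ℝⁿ with L-Lipschitz gradient, 0 ≤ μ < L, and set r = L/(L-μ). Then for all z₁, z₂: f(z₁) ≥ f(z₂) + ⟨∇f(z₂), z₁ - z₂⟩ + r·[(μ/2)‖z₁ - z₂‖² + (1/(2L))‖∇f(z₁) - ∇f(z₂)‖² - (μ/L)⟨∇f(z₁) - ∇f(z₂), z₁ - z₂⟩]. -/
open Set RealInnerProductSpace Filter Topology

section Aux

variable {E : Type*} [NormedAddCommGroup E] [InnerProductSpace ℝ E] [CompleteSpace E]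

lemma myLineDeriv (f : E → ℝ) (hdiff : Differentiable ℝ f) (x v : E) (t : ℝ) :
    HasDerivAt (fun s : ℝ => f (x + s • v)) ⟪gradient f (x + t • v), v⟫ t := by
  have h1 : HasDerivAt (fun s : ℝ => x + s • v) v t := by
    simpa using ((hasDerivAt_id t).smul_const v).const_add x
  have h2 := (hdiff (x + t • v)).hasGradientAt
  rw [hasGradientAt_iff_hasFDerivAt] at h2
  exact h2.comp_hasDerivAt t h1

lemma descent (f : E → ℝ) (L : ℝ) (hL : 0 ≤ L) (hdiff : Differentiable ℝ f)
    (hlip : LipschitzWith (Real.toNNReal L) (gradient f)) (x y : E) :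
    f y ≤ f x + ⟪gradient f x, y - x⟫ + L / 2 * ‖y - x‖ ^ 2 := by
  set v := y - x with hv
  set h : ℝ → ℝ := fun t =>
    L / 2 * ‖v‖ ^ 2 * t ^ 2 + ⟪gradient f x, v⟫ * t + f x - f (x + t • v) with hh
  have hder : ∀ t : ℝ, HasDerivAt h
      (L / 2 * ‖v‖ ^ 2 * (2 * t) + ⟪gradient f x, v⟫ - ⟪gradient f (x + t • v), v⟫) t := by
    intro t
    have h1 : HasDerivAt (fun t : ℝ => L / 2 * ‖v‖ ^ 2 * t ^ 2 + ⟪gradient f x, v⟫ * t + f x)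
        (L / 2 * ‖v‖ ^ 2 * (2 * t) + ⟪gradient f x, v⟫) t := by
      have := (((hasDerivAt_pow 2 t).const_mul (L / 2 * ‖v‖ ^ 2)).add
        ((hasDerivAt_id t).const_mul ⟪gradient f x, v⟫)).add_const (f x)
      exact this.congr_deriv (by ring)
    exact h1.sub (myLineDeriv f hdiff x v t)
  have hmono : MonotoneOn h (Icc 0 1) := by
    apply monotoneOn_of_deriv_nonneg (convex_Icc 0 1)
    · have : Differentiable ℝ h := fun t => (hder t).differentiableAt
      exact this.continuous.continuousOn
    · intro t _
      exact (hder t).differentiableAt.differentiableWithinAt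
    · intro t ht
      rw [interior_Icc] at ht
      rw [(hder t).deriv]
      have hl : ‖gradient f (x + t • v) - gradient f x‖ ≤ L * (t * ‖v‖) := by
        have := hlip.dist_le_mul (x + t • v) x
        rw [dist_eq_norm, dist_eq_norm] at this
        simpa [norm_smul, abs_of_pos ht.1, Real.coe_toNNReal L hL, mul_assoc] using this
      have hi : ⟪gradient f (x + t • v) - gradient f x, v⟫
          ≤ ‖gradient f (x + t • v) - gradient f x‖ * ‖v‖ := real_inner_le_norm _ _
      rw [inner_sub_left] at hi
      nlinarith [norm_nonneg v, ht.1.le]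
  have h01 : h 0 ≤ h 1 := hmono (by constructor <;> norm_num) (by constructor <;> norm_num)
    zero_le_one
  have h0 : h 0 = 0 := by simp [hh]
  have h1 : h 1 = L / 2 * ‖v‖ ^ 2 + ⟪gradient f x, v⟫ + f x - f y := by
    simp [hh, hv]
  rw [h0, h1] at h01
  linarith

lemma convex_lb (g : E → ℝ) (hconv : ConvexOn ℝ Set.univ g) (x y : E) (d : ℝ)
    (hder : HasDerivAt (fun t : ℝ => g (x + t • (y - x))) d 0) :
    g x + d ≤ g y := by
  have hslope : ∀ t ∈ Set.Ioo (0:ℝ) 1,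
      slope (fun t : ℝ => g (x + t • (y - x))) 0 t ≤ g y - g x := by
    intro t ht
    have hxt : x + t • (y - x) = (1 - t) • x + t • y := by module
    have hc := hconv.2 (mem_univ x) (mem_univ y)
      (by linarith [ht.2] : (0:ℝ) ≤ 1 - t) ht.1.le (by ring)
    rw [← hxt] at hc
    simp only [smul_eq_mul] at hc
    rw [slope_def_field]
    simp only [zero_smul, add_zero, sub_zero]
    rw [div_le_iff₀ ht.1]
    nlinarith [hc]
  rw [hasDerivAt_iff_tendsto_slope] at hder
  have h2 : Tendsto (slope (fun t : ℝ => g (x + t • (y - x))) 0) (𝓝[>] 0) (𝓝 d) :=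
    hder.mono_left (nhdsWithin_mono _ fun t ht => ne_of_gt ht)
  have h3 : d ≤ g y - g x :=
    le_of_tendsto h2 (Filter.eventually_of_mem
      (Ioo_mem_nhdsGT_of_mem ⟨le_refl 0, zero_lt_one⟩) hslope)
  linarith

lemma phi_line (f : E → ℝ) (hdiff : Differentiable ℝ f) (μ : ℝ) (c x v : E) :
    HasDerivAt (fun s : ℝ => f (x + s • v) - μ / 2 * ‖x + s • v‖ ^ 2 - ⟪c, x + s • v⟫)
      (⟪gradient f x, v⟫ - μ * ⟪x, v⟫ - ⟪c, v⟫) 0 := by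
  have h1 : HasDerivAt (fun s : ℝ => x + s • v) v 0 := by
    simpa using ((hasDerivAt_id (0:ℝ)).smul_const v).const_add x
  have hf : HasDerivAt (fun s : ℝ => f (x + s • v)) ⟪gradient f x, v⟫ 0 := by
    simpa using myLineDeriv f hdiff x v 0
  have hn : HasDerivAt (fun s : ℝ => μ / 2 * ‖x + s • v‖ ^ 2) (μ * ⟪x, v⟫) 0 := by
    have h2 : HasDerivAt (fun s : ℝ => (⟪x + s • v, x + s • v⟫ : ℝ))
        (⟪x + (0:ℝ) • v, v⟫ + ⟪v, x + (0:ℝ) • v⟫) 0 := h1.inner ℝ h1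
    have h3 : HasDerivAt (fun s : ℝ => μ / 2 * (⟪x + s • v, x + s • v⟫ : ℝ))
        (μ / 2 * (⟪x + (0:ℝ) • v, v⟫ + ⟪v, x + (0:ℝ) • v⟫)) 0 := h2.const_mul _
    have := h3
    simp only [real_inner_self_eq_norm_sq] at this
    convert this using 1
    simp [real_inner_comm]
    ring
  have hl : HasDerivAt (fun s : ℝ => (⟪c, x + s • v⟫ : ℝ)) ⟪c, v⟫ 0 := by
    simpa using (hasDerivAt_const (0:ℝ) c).inner ℝ h1
  exact (hf.sub hn).sub hl

end Aux

theorem stmt_2 {n : ℕ} (f : EuclideanSpace ℝ (Fin n) → ℝ) (L μ : ℝ)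
    (hμ : 0 ≤ μ) (hμL : μ < L)
    (hdiff : Differentiable ℝ f)
    (hconv : StrongConvexOn Set.univ μ f)
    (hlip : LipschitzWith (Real.toNNReal L) (gradient f)) :
    ∀ z₁ z₂ : EuclideanSpace ℝ (Fin n),
      f z₁ ≥ f z₂ + ⟪gradient f z₂, z₁ - z₂⟫ +
        (L / (L - μ)) * (μ / 2 * ‖z₁ - z₂‖ ^ 2
          + 1 / (2 * L) * ‖gradient f z₁ - gradient f z₂‖ ^ 2
          - μ / L * ⟪gradient f z₁ - gradient f z₂, z₁ - z₂⟫) := by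
  intro z₁ z₂
  have hL0 : 0 < L := lt_of_le_of_lt hμ hμL
  set K : ℝ := L - μ with hKdef
  have hK : 0 < K := by simp [hKdef]; linarith
  set G₁ : EuclideanSpace ℝ (Fin n) := gradient f z₁ - μ • z₁ with hG₁
  set G₂ : EuclideanSpace ℝ (Fin n) := gradient f z₂ - μ • z₂ with hG₂
  set u : EuclideanSpace ℝ (Fin n) := G₁ - G₂ with hu
  set w : EuclideanSpace ℝ (Fin n) := z₁ - K⁻¹ • u with hw
  -- the shifted function φ is convex
  have hgconv : ConvexOn ℝ Set.univ (fun x => f x - μ / 2 * ‖x‖ ^ 2) :=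
    strongConvexOn_iff_convex.mp hconv
  have hlin : ConcaveOn ℝ Set.univ (fun x : EuclideanSpace ℝ (Fin n) => (⟪G₂, x⟫ : ℝ)) := by
    refine ⟨convex_univ, fun x _ y _ a b ha hb hab => le_of_eq ?_⟩
    simp only [smul_eq_mul, inner_add_right, real_inner_smul_right]
  have hφconv : ConvexOn ℝ Set.univ
      (fun x : EuclideanSpace ℝ (Fin n) => f x - μ / 2 * ‖x‖ ^ 2 - ⟪G₂, x⟫) :=
    hgconv.sub hlin
  -- step 1: φ z₂ ≤ φ w
  have hder := phi_line f hdiff μ G₂ z₂ (w - z₂)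
  have hd0 : (⟪gradient f z₂, w - z₂⟫ : ℝ) - μ * ⟪z₂, w - z₂⟫ - ⟪G₂, w - z₂⟫ = 0 := by
    rw [hG₂, inner_sub_left, real_inner_smul_left]; ring
  rw [hd0] at hder
  have step1 := convex_lb _ hφconv z₂ w 0 hder
  rw [add_zero] at step1
  -- step 2: descent at z₁ evaluated at w
  have step2 := descent f L hL0.le hdiff hlip z₁ w
  have e3 : w - z₁ = -(K⁻¹ • u) := by rw [hw]; abel
  rw [e3] at step2
  -- expansion facts
  have e1 : ‖w‖ ^ 2 = ‖z₁‖ ^ 2 - 2 * (K⁻¹ * ⟪z₁, u⟫) + K⁻¹ ^ 2 * ‖u‖ ^ 2 := by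
    rw [hw, norm_sub_sq_real, real_inner_smul_right, norm_smul]
    simp [mul_pow, sq_abs]
  have e4 : ‖-(K⁻¹ • u)‖ ^ 2 = K⁻¹ ^ 2 * ‖u‖ ^ 2 := by
    simp [norm_smul, mul_pow, sq_abs]
  have e5 : (⟪gradient f z₁, -(K⁻¹ • u)⟫ : ℝ) = -(K⁻¹ * ⟪gradient f z₁, u⟫) := by
    rw [inner_neg_right, real_inner_smul_right]
  have e6 : (⟪G₂, w⟫ : ℝ) = ⟪G₂, z₁⟫ - K⁻¹ * ⟪G₂, u⟫ := by
    rw [hw, inner_sub_right, real_inner_smul_right]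
  have e7 : (⟪gradient f z₁, u⟫ : ℝ) - μ * ⟪z₁, u⟫ - ⟪G₂, u⟫ = ‖u‖ ^ 2 := by
    have h1 : (⟪gradient f z₁, u⟫ : ℝ) - μ * ⟪z₁, u⟫ = ⟪G₁, u⟫ := by
      rw [hG₁, inner_sub_left, real_inner_smul_left]
    have h2 : (⟪G₁, u⟫ : ℝ) - ⟪G₂, u⟫ = ⟪u, u⟫ := by rw [← inner_sub_left, ← hu]
    have h3 : (⟪u, u⟫ : ℝ) = ‖u‖ ^ 2 := real_inner_self_eq_norm_sq u
    linarith
  rw [e4, e5] at step2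
  rw [e1, e6] at step1
  -- combine into key inequality
  have key : f z₂ - μ / 2 * ‖z₂‖ ^ 2 - ⟪G₂, z₂⟫ ≤
      f z₁ - μ / 2 * ‖z₁‖ ^ 2 - ⟪G₂, z₁⟫ - 1 / (2 * K) * ‖u‖ ^ 2 := by
    have e7m : K⁻¹ * ⟪gradient f z₁, u⟫ - μ * (K⁻¹ * ⟪z₁, u⟫) - K⁻¹ * ⟪G₂, u⟫
        = K⁻¹ * ‖u‖ ^ 2 := by linear_combination K⁻¹ * e7
    have harith : L / 2 * (K⁻¹ ^ 2 * ‖u‖ ^ 2) - μ / 2 * (K⁻¹ ^ 2 * ‖u‖ ^ 2)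
        - K⁻¹ * ‖u‖ ^ 2 = -(1 / (2 * K) * ‖u‖ ^ 2) := by
      rw [hKdef]
      field_simp
      ring
    linarith [step1, step2, e7m, harith]
  -- final expansion
  have E1 : ‖z₁‖ ^ 2 = ‖z₂‖ ^ 2 + 2 * ⟪z₂, z₁ - z₂⟫ + ‖z₁ - z₂‖ ^ 2 := by
    have := norm_add_sq_real z₂ (z₁ - z₂)
    rwa [add_sub_cancel] at this
  have E2 : (⟪G₂, z₁⟫ : ℝ) - ⟪G₂, z₂⟫ = ⟪gradient f z₂, z₁ - z₂⟫ - μ * ⟪z₂, z₁ - z₂⟫ := by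
    rw [← inner_sub_right, hG₂, inner_sub_left, real_inner_smul_left]
  have ueq : u = (gradient f z₁ - gradient f z₂) - μ • (z₁ - z₂) := by
    rw [hu, hG₁, hG₂]; module
  have E3 : ‖u‖ ^ 2 = ‖gradient f z₁ - gradient f z₂‖ ^ 2
      - 2 * μ * ⟪gradient f z₁ - gradient f z₂, z₁ - z₂⟫ + μ ^ 2 * ‖z₁ - z₂‖ ^ 2 := by
    rw [ueq, norm_sub_sq_real, real_inner_smul_right, norm_smul]
    simp [mul_pow, sq_abs]
    ring
  have Efin : (L / (L - μ)) * (μ / 2 * ‖z₁ - z₂‖ ^ 2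
      + 1 / (2 * L) * ‖gradient f z₁ - gradient f z₂‖ ^ 2
      - μ / L * ⟪gradient f z₁ - gradient f z₂, z₁ - z₂⟫)
      = μ / 2 * ‖z₁ - z₂‖ ^ 2 + 1 / (2 * K) * (‖gradient f z₁ - gradient f z₂‖ ^ 2
      - 2 * μ * ⟪gradient f z₁ - gradient f z₂, z₁ - z₂⟫ + μ ^ 2 * ‖z₁ - z₂‖ ^ 2) := by
    rw [hKdef]
    have hLμ : L - μ ≠ 0 := by linarith
    field_simp
    ring
  rw [ge_iff_le, Efin]
  rw [E3] at key
  have E1m : μ / 2 * ‖z₁‖ ^ 2 = μ / 2 * ‖z₂‖ ^ 2 + μ * ⟪z₂, z₁ - z₂⟫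
      + μ / 2 * ‖z₁ - z₂‖ ^ 2 := by linear_combination (μ / 2) * E1
  linarith [key, E1m, E2]
end

section
/- Let f be μ-strongly convex differentiable with L-Lipschitz gradient (0 ≤ μ < L), let x* be a minimizer of f, r = L/(L-μ), and for a point y define x = y - (1/L)∇f(y) and g = ∇f(y). Then f(y) ≥ f(x*) + (μr/2)‖x* - x‖² + (1/(2L))‖g‖². -/
open Set RealInnerProductSpace

lemma aux_line {n : ℕ} {f : EuclideanSpace ℝ (Fin n) → ℝ} (hdiff : Differentiable ℝ f)
    (a d : EuclideanSpace ℝ (Fin n)) (t : ℝ) :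
    HasDerivAt (fun s : ℝ => f (a + s • d)) ⟪gradient f (a + t • d), d⟫ t := by
  have h1 : HasFDerivAt f ((InnerProductSpace.toDual ℝ _) (gradient f (a + t • d))) (a + t • d) :=
    hasGradientAt_iff_hasFDerivAt.mp (hdiff _).hasGradientAt
  have h2 : HasDerivAt (fun s : ℝ => a + s • d) d t := by
    simpa using ((hasDerivAt_id t).smul_const d).const_add a
  have h3 := h1.comp_hasDerivAt t h2
  rw [InnerProductSpace.toDual_apply_apply] at h3
  exact h3

lemma aux_lower {n : ℕ} {f : EuclideanSpace ℝ (Fin n) → ℝ} {μ : ℝ}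
    (hdiff : Differentiable ℝ f) (hconv : StrongConvexOn Set.univ μ f)
    (a b : EuclideanSpace ℝ (Fin n)) :
    f a + ⟪gradient f a, b - a⟫ + μ / 2 * ‖b - a‖ ^ 2 ≤ f b := by
  set d := b - a with hd
  set c := μ / 2 * ‖b - a‖ ^ 2 with hc
  have hder : HasDerivAt (fun s : ℝ => f (a + s • d)) ⟪gradient f a, d⟫ 0 := by
    simpa using aux_line hdiff a d 0
  have hslope : Filter.Tendsto (fun t : ℝ => (f (a + t • d) - f a) / t) (nhdsWithin 0 (Ioi 0))
      (nhds ⟪gradient f a, d⟫) := by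
    have := hasDerivAt_iff_tendsto_slope.mp hder
    have h2 := this.mono_left (nhdsWithin_mono 0 (fun t ht => ne_of_gt ht : Ioi (0:ℝ) ⊆ {0}ᶜ))
    refine h2.congr (fun t => ?_)
    simp [slope_def_field]
  have hbound : ∀ t ∈ Ioc (0:ℝ) 1, (f (a + t • d) - f a) / t ≤ f b - f a - (1 - t) * c := by
    intro t ht
    have hcomb := hconv.2 (mem_univ b) (mem_univ a)
      (show (0:ℝ) ≤ t from le_of_lt ht.1) (show (0:ℝ) ≤ 1 - t by linarith [ht.2])
      (show t + (1 - t) = 1 by ring)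
    have hpt : t • b + (1 - t) • a = a + t • d := by
      rw [hd]; module
    rw [hpt] at hcomb
    rw [div_le_iff₀ ht.1]
    simp only [smul_eq_mul] at hcomb
    rw [← hc] at hcomb
    nlinarith [hcomb]
  have hrhs : Filter.Tendsto (fun t : ℝ => f b - f a - (1 - t) * c) (nhdsWithin 0 (Ioi 0))
      (nhds (f b - f a - c)) := by
    have hcont : Continuous fun t : ℝ => f b - f a - (1 - t) * c := by continuity
    have := (hcont.tendsto 0).mono_left (nhdsWithin_le_nhds (s := Ioi (0:ℝ)))
    simpa using this
  have hle : ⟪gradient f a, d⟫ ≤ f b - f a - c := by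
    refine le_of_tendsto_of_tendsto hslope hrhs ?_
    exact Filter.eventually_of_mem (Ioc_mem_nhdsGT_of_mem ⟨le_refl 0, zero_lt_one⟩) hbound
  linarith

lemma aux_upper {n : ℕ} {f : EuclideanSpace ℝ (Fin n) → ℝ} {L : ℝ} (hL : 0 < L)
    (hdiff : Differentiable ℝ f)
    (hlip : LipschitzWith (Real.toNNReal L) (gradient f))
    (a b : EuclideanSpace ℝ (Fin n)) :
    f b ≤ f a + ⟪gradient f a, b - a⟫ + L / 2 * ‖b - a‖ ^ 2 := by
  set d := b - a with hd
  have hlipn : ∀ p q : EuclideanSpace ℝ (Fin n), ‖gradient f p - gradient f q‖ ≤ L * ‖p - q‖ := by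
    intro p q
    have := hlip.dist_le_mul p q
    rwa [dist_eq_norm, dist_eq_norm, Real.coe_toNNReal L hL.le] at this
  have hG : Continuous fun t : ℝ => ⟪gradient f (a + t • d), d⟫ := by
    have hgc : Continuous (gradient f) := hlip.continuous
    exact (hgc.comp (by continuity)).inner continuous_const
  have hint : f (a + (1:ℝ) • d) - f (a + (0:ℝ) • d)
      = ∫ t in (0:ℝ)..1, ⟪gradient f (a + t • d), d⟫ := by
    rw [intervalIntegral.integral_eq_sub_of_hasDerivAt
      (fun t _ => aux_line hdiff a d t) (hG.intervalIntegrable 0 1)]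
  have hmono : ∫ t in (0:ℝ)..1, ⟪gradient f (a + t • d), d⟫
      ≤ ∫ t in (0:ℝ)..1, (⟪gradient f a, d⟫ + (L * ‖d‖ ^ 2) * t) := by
    refine intervalIntegral.integral_mono_on zero_le_one (hG.intervalIntegrable 0 1)
      ((by continuity : Continuous fun t : ℝ => ⟪gradient f a, d⟫ + (L * ‖d‖ ^ 2) * t).intervalIntegrable 0 1)
      (fun t ht => ?_)
    have h1 : ⟪gradient f (a + t • d) - gradient f a, d⟫ ≤ ‖gradient f (a + t • d) - gradient f a‖ * ‖d‖ :=
      real_inner_le_norm _ _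
    have h2 : ‖gradient f (a + t • d) - gradient f a‖ ≤ L * (t * ‖d‖) := by
      have := hlipn (a + t • d) a
      simpa [norm_smul, abs_of_nonneg ht.1] using this
    have h3 : ⟪gradient f (a + t • d) - gradient f a, d⟫ ≤ (L * ‖d‖ ^ 2) * t := by
      calc ⟪gradient f (a + t • d) - gradient f a, d⟫ ≤ _ := h1
        _ ≤ L * (t * ‖d‖) * ‖d‖ := by
            have : (0:ℝ) ≤ ‖d‖ := norm_nonneg _
            nlinarith [norm_nonneg (gradient f (a + t • d) - gradient f a)]
        _ = (L * ‖d‖ ^ 2) * t := by ring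
    have hexp : ⟪gradient f (a + t • d) - gradient f a, d⟫
        = ⟪gradient f (a + t • d), d⟫ - ⟪gradient f a, d⟫ := by
      rw [inner_sub_left]
    linarith [hexp ▸ h3]
  have hval : ∫ t in (0:ℝ)..1, (⟪gradient f a, d⟫ + (L * ‖d‖ ^ 2) * t)
      = ⟪gradient f a, d⟫ + L / 2 * ‖d‖ ^ 2 := by
    rw [intervalIntegral.integral_add (g := fun t : ℝ => (L * ‖d‖ ^ 2) * t) (intervalIntegrable_const)
      ((continuous_const.mul continuous_id').intervalIntegrable 0 1)]
    rw [intervalIntegral.integral_const_mul, integral_id]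
    simp
    ring
  have hb : a + (1:ℝ) • d = b := by rw [hd]; module
  have ha : a + (0:ℝ) • d = a := by simp
  rw [hb, ha] at hint
  linarith [hint ▸ hmono, hval ▸ hmono, hmono.trans_eq hval, hint.le.trans (hmono.trans_eq hval)]

set_option maxHeartbeats 1000000 in
theorem stmt_4 {n : ℕ} (f : EuclideanSpace ℝ (Fin n) → ℝ) (L μ : ℝ)
    (hμ : 0 ≤ μ) (hμL : μ < L)
    (hdiff : Differentiable ℝ f)
    (hconv : StrongConvexOn Set.univ μ f)
    (hlip : LipschitzWith (Real.toNNReal L) (gradient f))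
    (xstar : EuclideanSpace ℝ (Fin n)) (hmin : ∀ z, f xstar ≤ f z)
    (y x : EuclideanSpace ℝ (Fin n)) (g : EuclideanSpace ℝ (Fin n))
    (hg : g = gradient f y) (hx : x = y - (1 / L) • g) :
    f y ≥ f xstar + μ * (L / (L - μ)) / 2 * ‖xstar - x‖ ^ 2
      + 1 / (2 * L) * ‖g‖ ^ 2 := by
  have hL0 : (0:ℝ) < L := lt_of_le_of_lt hμ hμL
  set K := L - μ with hK
  have hK0 : 0 < K := by rw [hK]; linarith
  -- gradient vanishes at the minimizer
  have hg0 : gradient f xstar = 0 := by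
    have hloc : IsLocalMin f xstar := Filter.Eventually.of_forall hmin
    have hfd := hloc.fderiv_eq_zero
    unfold gradient
    rw [hfd]; simp
  set v : EuclideanSpace ℝ (Fin n) := g - μ • y + μ • xstar with hv
  -- general co-coercivity-style inequality for the shifted function
  have hcoer : ∀ z : EuclideanSpace ℝ (Fin n),
      f xstar + μ * ‖xstar‖ ^ 2 / 2 ≤ f y - μ / 2 * ‖y‖ ^ 2 + μ * ⟪xstar, y⟫
        + ⟪v, z - y⟫ + K / 2 * ‖z - y‖ ^ 2 := by
    intro z
    have h1 : f xstar + μ / 2 * ‖z - xstar‖ ^ 2 ≤ f z := by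
      have := aux_lower hdiff hconv xstar z
      rw [hg0] at this
      simpa using this
    have h2 : f z ≤ f y + ⟪g, z - y⟫ + L / 2 * ‖z - y‖ ^ 2 := by
      have := aux_upper hL0 hdiff hlip y z
      rwa [← hg] at this
    have e1 : ‖z - xstar‖ ^ 2 = ‖z‖ ^ 2 - 2 * ⟪z, xstar⟫ + ‖xstar‖ ^ 2 :=
      norm_sub_sq_real z xstar
    have e2 : ⟪g, z - y⟫ = ⟪v, z - y⟫ + μ * ⟪y, z - y⟫ - μ * ⟪xstar, z - y⟫ := by
      have hgv : g = v + μ • y - μ • xstar := by rw [hv]; module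
      rw [hgv]
      simp only [inner_sub_left, inner_add_left, real_inner_smul_left]
    have e3 : ⟪y, z - y⟫ = ⟪y, z⟫ - ‖y‖ ^ 2 := by
      rw [inner_sub_right, real_inner_self_eq_norm_sq]
    have e4 : ⟪xstar, z - y⟫ = ⟪xstar, z⟫ - ⟪xstar, y⟫ := by rw [inner_sub_right]
    have e5 : ‖z - y‖ ^ 2 = ‖z‖ ^ 2 - 2 * ⟪z, y⟫ + ‖y‖ ^ 2 := norm_sub_sq_real z y
    have e6 : ⟪z, y⟫ = ⟪y, z⟫ := real_inner_comm y z
    have e7 : ⟪z, xstar⟫ = ⟪xstar, z⟫ := real_inner_comm xstar z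
    rw [e1, e7] at h1
    rw [e2, e3, e4] at h2
    rw [e5, e6, hK]
    nlinarith [h1, h2]
  -- specialize to the gradient-descent point of the shifted function
  have hmain : f xstar + μ * ‖xstar‖ ^ 2 / 2
      ≤ f y - μ / 2 * ‖y‖ ^ 2 + μ * ⟪xstar, y⟫ - 1 / (2 * K) * ‖v‖ ^ 2 := by
    have h := hcoer (y - (1 / K) • v)
    have hzy : (y - (1 / K) • v) - y = -((1 / K) • v) := by module
    rw [hzy] at h
    rw [inner_neg_right, real_inner_smul_right, real_inner_self_eq_norm_sq, norm_neg,
      norm_smul] at h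
    have habs : |(1 : ℝ) / K| = 1 / K := abs_of_pos (by positivity)
    rw [Real.norm_eq_abs, habs] at h
    have hq : K / 2 * (1 / K * ‖v‖) ^ 2 - 1 / K * ‖v‖ ^ 2 = -(1 / (2 * K) * ‖v‖ ^ 2) := by
      field_simp
      ring
    nlinarith [h, hq]
  -- final algebra
  have hB : ‖v‖ ^ 2 = ‖g‖ ^ 2 - 2 * μ * ⟪g, y - xstar⟫ + μ ^ 2 * ‖y - xstar‖ ^ 2 := by
    have hv' : v = g - μ • (y - xstar) := by rw [hv]; module
    rw [hv', norm_sub_sq_real, real_inner_smul_right, norm_smul, Real.norm_eq_abs,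
      abs_of_nonneg hμ]
    ring
  have hD : ‖xstar - x‖ ^ 2 = (1 / L) ^ 2 * ‖g‖ ^ 2 - 2 * (1 / L) * ⟪g, y - xstar⟫
      + ‖y - xstar‖ ^ 2 := by
    have hxx : xstar - x = (1 / L) • g - (y - xstar) := by rw [hx]; module
    rw [hxx, norm_sub_sq_real, norm_smul, Real.norm_eq_abs, abs_of_pos (by positivity : (0:ℝ) < 1 / L),
      real_inner_smul_left, real_inner_comm]
    ring
  have hY : ‖y - xstar‖ ^ 2 = ‖y‖ ^ 2 - 2 * ⟪xstar, y⟫ + ‖xstar‖ ^ 2 := by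
    rw [norm_sub_sq_real, real_inner_comm]
  have hident : μ / 2 * ‖y - xstar‖ ^ 2 + 1 / (2 * K) * ‖v‖ ^ 2
      = μ * (L / (L - μ)) / 2 * ‖xstar - x‖ ^ 2 + 1 / (2 * L) * ‖g‖ ^ 2 := by
    rw [hB, hD, hK]
    field_simp [hL0.ne', (sub_pos.mpr hμL).ne']
    ring
  have hfinal : f xstar + (μ / 2 * ‖y - xstar‖ ^ 2 + 1 / (2 * K) * ‖v‖ ^ 2) ≤ f y := by
    rw [hY]
    linarith [hmain]
  rw [hident] at hfinal
  linarith [hfinal]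
end

section
/- Let γ₁ > 0, L > 0, μ = 0, and define recursively a_{k+1} = (γ_k + √(γ_k(γ_k + 2L A_k)))/L with A_{k+1} = A_k + a_{k+1}, γ_{k+1} = γ_k (= γ₁), starting from A₁ ≥ 0. Then A_k ≥ (γ₁/(2L))k² for all k ≥ 2. -/
theorem stmt_5 (L γ₁ : ℝ) (hL : 0 < L) (hγ : 0 < γ₁)
    (A : ℕ → ℝ) (hA1 : 0 ≤ A 1)
    (hrec : ∀ k ≥ 1, A (k + 1) =
      A k + (1 / L) * (γ₁ + Real.sqrt (γ₁ * (γ₁ + 2 * L * A k)))) :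
    ∀ k ≥ 2, A k ≥ γ₁ / (2 * L) * (k : ℝ) ^ 2 := by
  intro k hk
  induction k, hk using Nat.le_induction with
  | base =>
    have h := hrec 1 (le_refl 1)
    have hs : γ₁ ≤ Real.sqrt (γ₁ * (γ₁ + 2 * L * A 1)) := by
      calc γ₁ = Real.sqrt (γ₁ ^ 2) := (Real.sqrt_sq hγ.le).symm
        _ ≤ _ := by
            apply Real.sqrt_le_sqrt
            nlinarith [mul_nonneg hL.le hA1]
    have hinv : (1 / L) * (2 * L) = 2 := by field_simp
    rw [ge_iff_le, div_mul_eq_mul_div, div_le_iff₀ (by positivity)]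
    norm_num
    rw [h]
    nlinarith [hs, hA1, hL, hγ]
  | succ n hn ih =>
    have h := hrec n (by omega)
    have h2 : γ₁ * (n : ℝ) ^ 2 ≤ 2 * L * A n := by
      have := ih
      rw [ge_iff_le, div_mul_eq_mul_div, div_le_iff₀ (by positivity)] at this
      linarith
    have hs : γ₁ * (n : ℝ) ≤ Real.sqrt (γ₁ * (γ₁ + 2 * L * A n)) := by
      have hsq : (γ₁ * (n : ℝ)) ^ 2 ≤ γ₁ * (γ₁ + 2 * L * A n) := by
        nlinarith [mul_le_mul_of_nonneg_left h2 hγ.le]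
      calc γ₁ * (n : ℝ) = Real.sqrt ((γ₁ * (n : ℝ)) ^ 2) :=
            (Real.sqrt_sq (by positivity)).symm
        _ ≤ _ := Real.sqrt_le_sqrt hsq
    have hexp : (1 / L) * (γ₁ + Real.sqrt (γ₁ * (γ₁ + 2 * L * A n))) * (2 * L)
        = 2 * (γ₁ + Real.sqrt (γ₁ * (γ₁ + 2 * L * A n))) := by
      field_simp
    rw [ge_iff_le, div_mul_eq_mul_div, div_le_iff₀ (by positivity)]
    rw [h]
    push_cast
    nlinarith [h2, hs, hγ, hexp]
end

section
/- Let 0 < μ < L, q = μ/L, r = 1/(1-q). Suppose the sequences satisfy L·ā_{k+1}² = 2r·A_{k+1}·γ_{k+1} with ā_{k+1} = r(a_{k+1} + q A_{k+1}), a_{k+1} = A_{k+1} - A_k > 0, and γ_{k+1} ≥ 2μr A_{k+1}. Then A_{k+1} ≥ (1 - √q)^{-2} A_k. -/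
theorem stmt_6 (L μ q r : ℝ) (hμ : 0 < μ) (hμL : μ < L)
    (hq : q = μ / L) (hr : r = 1 / (1 - q))
    (Ak Ak1 ak1 abar γk1 : ℝ)
    (hAk : 0 < Ak) (hlt : Ak < Ak1)
    (ha : ak1 = Ak1 - Ak)
    (habar : abar = r * (ak1 + q * Ak1))
    (hγ : γk1 ≥ 2 * μ * r * Ak1)
    (heq : L * abar ^ 2 = 2 * r * Ak1 * γk1) :
    Ak1 ≥ (1 - Real.sqrt q)⁻¹ ^ 2 * Ak := by
  have hL : 0 < L := hμ.trans hμL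
  have hq0 : 0 < q := by rw [hq]; positivity
  have hq1 : q < 1 := by rw [hq]; exact (div_lt_one hL).2 hμL
  have hr0 : 0 < r := by
    rw [hr]
    have : 0 < 1 - q := by linarith
    positivity
  have hA1 : 0 < Ak1 := hAk.trans hlt
  set s := Real.sqrt q with hs
  have hs2 : s ^ 2 = q := Real.sq_sqrt hq0.le
  have hs0 : 0 < s := Real.sqrt_pos.2 hq0
  have hs1 : s < 1 := by
    nlinarith [hs2]
  have hμq : μ = q * L := by rw [hq]; field_simp
  -- from heq and hγ: L * abar^2 ≥ 4 μ r^2 Ak1^2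
  have h1 : L * abar ^ 2 ≥ 4 * μ * r ^ 2 * Ak1 ^ 2 := by
    rw [heq]; nlinarith [mul_pos hr0 hA1]
  -- abar = r*(ak1 + q*Ak1), so (ak1+q*Ak1)^2 ≥ 4 q Ak1^2
  have h2 : (ak1 + q * Ak1) ^ 2 ≥ 4 * q * Ak1 ^ 2 := by
    rw [habar, hμq] at h1
    have : L * r ^ 2 * (ak1 + q * Ak1) ^ 2 ≥ L * r ^ 2 * (4 * q * Ak1 ^ 2) := by
      nlinarith [h1]
    exact le_of_mul_le_mul_left this (by positivity)
  have hpos : 0 < ak1 + q * Ak1 := by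
    have : 0 < ak1 := by rw [ha]; linarith
    nlinarith
  have h3 : ak1 + q * Ak1 ≥ 2 * s * Ak1 := by
    nlinarith [hs2, mul_pos hs0 hA1, sq_nonneg (ak1 + q * Ak1 - 2 * s * Ak1),
      sq_nonneg (ak1 + q * Ak1 + 2 * s * Ak1)]
  have h4 : Ak ≤ Ak1 * (1 - s) ^ 2 := by
    rw [ha] at h3
    nlinarith [hs2]
  rw [ge_iff_le, inv_pow, ← div_eq_inv_mul, div_le_iff₀ (pow_pos (by linarith : (0:ℝ) < 1 - s) 2)]
  linarith [h4]
end

section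
/- Let F = f + Ψ where f : ℝⁿ → ℝ is differentiable, μ_f-strongly convex, and Ψ : ℝⁿ → ℝ ∪ {+∞} is μ_Ψ-strongly convex, proper, lsc. Fix y and L_k > 0, let x_k = prox_{(1/L_k)Ψ}(y - (1/L_k)∇f(y)), and suppose the descent rule f(x_k) ≤ f(y) + ⟨∇f(y), x_k - y⟩ + (L_k/2)‖x_k - y‖² holds. Set L̄_k = L_k + μ_Ψ, μ = μ_f + μ_Ψ, and g_k = L̄_k(y - x_k). Then for all x: F(x) ≥ F(x_k) + (1/(2L̄_k))‖g_k‖² + ⟨g_k, x - y⟩ + (μ/2)‖x - y‖². -/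
open Set RealInnerProductSpace

/-- Composite lower-bound (Proposition on the composite gradient mapping).
`f` is differentiable and `μf`-strongly convex (encoded by the gradient
inequality at `y`), `Ψ` is `μΨ`-strongly convex with subgradient `ξ` at `xk`
(encoded by the strengthened subgradient inequality), `xk` is the proximal
gradient point, whose first-order optimality condition reads
`∇f(y) + Lk (xk - y) + ξ = 0`, and the descent rule holds. -/
theorem stmt_11 {n : ℕ} (f : EuclideanSpace ℝ (Fin n) → ℝ)
    (Ψ : EuclideanSpace ℝ (Fin n) → ℝ)
    (μf μΨ Lk : ℝ) (hμf : 0 ≤ μf) (hμΨ : 0 ≤ μΨ) (hLk : 0 < Lk)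
    (hdiff : Differentiable ℝ f)
    (y xk ξ : EuclideanSpace ℝ (Fin n))
    (hf : ∀ x, f x ≥ f y + ⟪gradient f y, x - y⟫ + μf / 2 * ‖x - y‖ ^ 2)
    (hΨ : ∀ x, Ψ x ≥ Ψ xk + ⟪ξ, x - xk⟫ + μΨ / 2 * ‖x - xk‖ ^ 2)
    (hopt : gradient f y + Lk • (xk - y) + ξ = 0)
    (hdesc : f xk ≤ f y + ⟪gradient f y, xk - y⟫ + Lk / 2 * ‖xk - y‖ ^ 2) :
    ∀ x, f x + Ψ x ≥ f xk + Ψ xk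
      + 1 / (2 * (Lk + μΨ)) * ‖(Lk + μΨ) • (y - xk)‖ ^ 2
      + ⟪(Lk + μΨ) • (y - xk), x - y⟫
      + (μf + μΨ) / 2 * ‖x - y‖ ^ 2 := by
  intro x
  have hL : (0:ℝ) < Lk + μΨ := by linarith
  have hξ : ξ = -(gradient f y + Lk • (xk - y)) :=
    eq_neg_of_add_eq_zero_right hopt
  have h1 := hf x
  have h2 := hΨ x
  -- rewrite x - xk as (x - y) - (xk - y)
  have hxxk : x - xk = (x - y) - (xk - y) := by abel
  rw [hxxk, hξ] at h2
  -- expand the inner product with ξ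
  have hinner : ⟪-(gradient f y + Lk • (xk - y)), (x - y) - (xk - y)⟫
      = -⟪gradient f y, x - y⟫ - Lk * ⟪xk - y, x - y⟫
        + ⟪gradient f y, xk - y⟫ + Lk * ‖xk - y‖ ^ 2 := by
    rw [inner_neg_left, inner_sub_right, inner_add_left, inner_add_left,
      real_inner_smul_left, real_inner_smul_left, real_inner_self_eq_norm_sq]
    ring
  rw [hinner] at h2
  -- expand ‖(x-y) - (xk-y)‖^2
  have hns : ‖(x - y) - (xk - y)‖ ^ 2
      = ‖x - y‖ ^ 2 - 2 * ⟪xk - y, x - y⟫ + ‖xk - y‖ ^ 2 := by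
    rw [norm_sub_sq_real, real_inner_comm]
  rw [hns] at h2
  -- expand the goal's norm and inner terms
  have hyk : y - xk = -(xk - y) := by abel
  have hgn : ‖(Lk + μΨ) • (y - xk)‖ ^ 2 = (Lk + μΨ) ^ 2 * ‖xk - y‖ ^ 2 := by
    rw [norm_smul, hyk, norm_neg, Real.norm_eq_abs, mul_pow, sq_abs]
  have hgi : ⟪(Lk + μΨ) • (y - xk), x - y⟫
      = -((Lk + μΨ) * ⟪xk - y, x - y⟫) := by
    rw [real_inner_smul_left, hyk, inner_neg_left]
    ring
  rw [hgn, hgi]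
  have hsimp : 1 / (2 * (Lk + μΨ)) * ((Lk + μΨ) ^ 2 * ‖xk - y‖ ^ 2)
      = (Lk + μΨ) / 2 * ‖xk - y‖ ^ 2 := by
    field_simp
  rw [hsimp]
  nlinarith [h1, h2, hdesc]
end

section
/- Define δ(q, α) = (1-α)√((1+α)(1+qα)) - √q·α(1 - qα²) for q, α ∈ [0,1]. Then δ is decreasing in α on [0,1] for every fixed q ∈ [0,1/3], i.e., for 0 ≤ α₁ ≤ α₂ ≤ 1 and q ∈ [0,1/3], δ(q, α₁) ≥ δ(q, α₂). -/
theorem stmt_13 (δ : ℝ → ℝ → ℝ)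
    (hδ : ∀ q α : ℝ, δ q α =
      (1 - α) * Real.sqrt ((1 + α) * (1 + q * α))
        - Real.sqrt q * α * (1 - q * α ^ 2)) :
    ∀ q : ℝ, 0 ≤ q → q ≤ 1 / 3 →
      ∀ α₁ α₂ : ℝ, 0 ≤ α₁ → α₁ ≤ α₂ → α₂ ≤ 1 →
        δ q α₁ ≥ δ q α₂ := by
  intro q hq0 hq3 α₁ α₂ h0 h12 h21
  have h11 : α₁ ≤ 1 := le_trans h12 h21
  have h02 : 0 ≤ α₂ := le_trans h0 h12
  have hd : 0 ≤ α₂ - α₁ := sub_nonneg.2 h12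
  have hq1 : 0 ≤ 1 - q := by linarith
  -- rewrite first terms as sqrt of a polynomial
  have key : ∀ α : ℝ, 0 ≤ α → α ≤ 1 →
      (1 - α) * Real.sqrt ((1 + α) * (1 + q * α)) =
        Real.sqrt ((1 - α) ^ 2 * ((1 + α) * (1 + q * α))) := by
    intro α ha0 ha1
    rw [Real.sqrt_mul (sq_nonneg (1 - α)),
      Real.sqrt_sq (by linarith : (0:ℝ) ≤ 1 - α)]
  have hA : Real.sqrt ((1 - α₂) ^ 2 * ((1 + α₂) * (1 + q * α₂))) ≤
      Real.sqrt ((1 - α₁) ^ 2 * ((1 + α₁) * (1 + q * α₁))) := by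
    apply Real.sqrt_le_sqrt
    have e1 : 0 ≤ 1 - α₁ * α₂ := by nlinarith
    have e2 : 0 ≤ α₁ + α₂ - α₁ ^ 2 - α₂ ^ 2 := by nlinarith
    have e3 : 0 ≤ 2 - (α₁ + α₂) := by linarith
    nlinarith [mul_nonneg (mul_nonneg hd hq1) e1,
      mul_nonneg (mul_nonneg hd hq1) e2,
      mul_nonneg (mul_nonneg (mul_nonneg hd hq0) (by linarith : (0:ℝ) ≤ α₁ + α₂)) e3,
      mul_nonneg (mul_nonneg (mul_nonneg hd hq0) (by linarith : (0:ℝ) ≤ α₁ + α₂)) e2]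
  have hBpoly : α₁ * (1 - q * α₁ ^ 2) ≤ α₂ * (1 - q * α₂ ^ 2) := by
    nlinarith [mul_nonneg hd (sub_nonneg.2 hq3),
      mul_nonneg (mul_nonneg hd hq0) (sq_nonneg (α₁ - α₂)),
      mul_nonneg (mul_nonneg hd hq0) (sq_nonneg (α₁ + α₂)),
      mul_nonneg (mul_nonneg (mul_nonneg hd hq0) h0) h02,
      mul_nonneg hd (mul_nonneg hq0 (mul_nonneg h0 (by linarith : (0:ℝ) ≤ 1 - α₁)))]
  have hsq : (0:ℝ) ≤ Real.sqrt q := Real.sqrt_nonneg q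
  have hB : Real.sqrt q * α₁ * (1 - q * α₁ ^ 2) ≤
      Real.sqrt q * α₂ * (1 - q * α₂ ^ 2) := by
    have := mul_le_mul_of_nonneg_left hBpoly hsq
    nlinarith [this]
  rw [hδ q α₁, hδ q α₂, key α₁ h0 h11, key α₂ h02 h21]
  linarith [hA, hB]
end

section
/- Define r(q, α) = √((1+α)(1+qα)) - √q·α for q, α ∈ [0,1]. Then 1 ≤ r(q, α) ≤ √2 for all q, α ∈ [0,1], and the function q ↦ √q · r(q, α) is nondecreasing on [0,1] for each fixed α ∈ [0,1]. -/
set_option maxHeartbeats 1000000 in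
theorem stmt_16 (r : ℝ → ℝ → ℝ)
    (hr : ∀ q α : ℝ, r q α =
      Real.sqrt ((1 + α) * (1 + q * α)) - Real.sqrt q * α) :
    (∀ q α : ℝ, 0 ≤ q → q ≤ 1 → 0 ≤ α → α ≤ 1 →
      1 ≤ r q α ∧ r q α ≤ Real.sqrt 2) ∧
    (∀ α : ℝ, 0 ≤ α → α ≤ 1 →
      MonotoneOn (fun q => Real.sqrt q * r q α) (Set.Icc (0 : ℝ) 1)) := by
  constructor
  · intro q α hq0 hq1 hα0 hα1
    rw [hr]
    have hsq : Real.sqrt q ^ 2 = q := Real.sq_sqrt hq0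
    have hsn : 0 ≤ Real.sqrt q := Real.sqrt_nonneg q
    have hsl : Real.sqrt q ≤ 1 := by
      calc Real.sqrt q ≤ Real.sqrt 1 := Real.sqrt_le_sqrt hq1
        _ = 1 := Real.sqrt_one
    constructor
    · have h1 : 1 + Real.sqrt q * α ≤ Real.sqrt ((1 + α) * (1 + q * α)) := by
        calc 1 + Real.sqrt q * α = Real.sqrt ((1 + Real.sqrt q * α) ^ 2) := by
              rw [Real.sqrt_sq (by positivity)]
          _ ≤ Real.sqrt ((1 + α) * (1 + q * α)) := by
              apply Real.sqrt_le_sqrt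
              nlinarith [mul_nonneg hα0 (sq_nonneg (1 - Real.sqrt q)), sq_nonneg α]
      linarith
    · have h2n : (1:ℝ) ≤ Real.sqrt 2 := by
        calc (1:ℝ) = Real.sqrt 1 := Real.sqrt_one.symm
          _ ≤ Real.sqrt 2 := Real.sqrt_le_sqrt (by norm_num)
      have h2sq : Real.sqrt 2 ^ 2 = 2 := Real.sq_sqrt (by norm_num)
      have h2 : Real.sqrt ((1 + α) * (1 + q * α)) ≤ Real.sqrt 2 + Real.sqrt q * α := by
        calc Real.sqrt ((1 + α) * (1 + q * α))
            ≤ Real.sqrt ((Real.sqrt 2 + Real.sqrt q * α) ^ 2) := by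
              apply Real.sqrt_le_sqrt
              nlinarith [mul_nonneg (mul_nonneg (by linarith : (0:ℝ) ≤ Real.sqrt 2 - 1)
                  hsn) hα0,
                mul_nonneg (mul_nonneg hsn (by linarith : (0:ℝ) ≤ 1 - Real.sqrt q)) hα0,
                sq_nonneg α, h2sq]
          _ = Real.sqrt 2 + Real.sqrt q * α := Real.sqrt_sq (by positivity)
      linarith
  · intro α hα0 hα1
    intro q1 hq1m q2 hq2m h12
    obtain ⟨hq10, hq11⟩ := hq1m
    obtain ⟨hq20, hq21⟩ := hq2m
    simp only
    rw [hr, hr]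
    have hq1α : 0 ≤ q1 * α := mul_nonneg hq10 hα0
    have hq2α : 0 ≤ q2 * α := mul_nonneg hq20 hα0
    have hs1 : Real.sqrt q1 ^ 2 = q1 := Real.sq_sqrt hq10
    have hs2 : Real.sqrt q2 ^ 2 = q2 := Real.sq_sqrt hq20
    have hu1 : Real.sqrt ((1 + α) * (1 + q1 * α)) ^ 2 = (1 + α) * (1 + q1 * α) :=
      Real.sq_sqrt (mul_nonneg (by linarith) (by linarith))
    have hu2 : Real.sqrt ((1 + α) * (1 + q2 * α)) ^ 2 = (1 + α) * (1 + q2 * α) :=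
      Real.sq_sqrt (mul_nonneg (by linarith) (by linarith))
    set s1 := Real.sqrt q1 with hs1d
    set s2 := Real.sqrt q2 with hs2d
    set u1 := Real.sqrt ((1 + α) * (1 + q1 * α)) with hu1d
    set u2 := Real.sqrt ((1 + α) * (1 + q2 * α)) with hu2d
    have hs1n : 0 ≤ s1 := Real.sqrt_nonneg _
    have hs2n : 0 ≤ s2 := Real.sqrt_nonneg _
    have hu1n : 0 ≤ u1 := Real.sqrt_nonneg _
    have hu2n : 0 ≤ u2 := Real.sqrt_nonneg _
    have hs1l : s1 ≤ 1 := by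
      calc s1 ≤ Real.sqrt 1 := Real.sqrt_le_sqrt hq11
        _ = 1 := Real.sqrt_one
    have hs2l : s2 ≤ 1 := by
      calc s2 ≤ Real.sqrt 1 := Real.sqrt_le_sqrt hq21
        _ = 1 := Real.sqrt_one
    have hu1l : u1 ≤ 1 + α := by
      calc u1 ≤ Real.sqrt ((1 + α) ^ 2) := Real.sqrt_le_sqrt (by
          nlinarith [mul_nonneg (mul_nonneg (by linarith : (0:ℝ) ≤ 1 + α) hα0)
            (by linarith : (0:ℝ) ≤ 1 - q1)])
        _ = 1 + α := Real.sqrt_sq (by linarith)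
    have hu2l : u2 ≤ 1 + α := by
      calc u2 ≤ Real.sqrt ((1 + α) ^ 2) := Real.sqrt_le_sqrt (by
          nlinarith [mul_nonneg (mul_nonneg (by linarith : (0:ℝ) ≤ 1 + α) hα0)
            (by linarith : (0:ℝ) ≤ 1 - q2)])
        _ = 1 + α := Real.sqrt_sq (by linarith)
    have hu2ge : 1 ≤ u2 := by
      calc (1:ℝ) = Real.sqrt 1 := Real.sqrt_one.symm
        _ ≤ u2 := Real.sqrt_le_sqrt (by nlinarith)
    -- goal: s1 * (u1 - s1 * α) ≤ s2 * (u2 - s2 * α)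
    rcases eq_or_lt_of_le hs2n with h | h
    · have hq2z : q2 = 0 := by rw [← hs2, ← h]; ring
      have hq1z : q1 = 0 := le_antisymm (hq2z ▸ h12) hq10
      have hs1z : s1 = 0 := by rw [hs1d, hq1z, Real.sqrt_zero]
      rw [hs1z, ← h]
      norm_num
    · have hP : 0 < s2 * u2 + s1 * u1 := by
        have h1 : 0 < s2 * u2 := mul_pos h (by linarith)
        have h2 : 0 ≤ s1 * u1 := mul_nonneg hs1n hu1n
        linarith
      have hA : α * (s1 + s2) ≤ 1 + (q1 + q2) * α := by
        nlinarith [mul_nonneg hα0 (sq_nonneg (2 * s1 - 1)),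
          mul_nonneg hα0 (sq_nonneg (2 * s2 - 1))]
      have hB : s2 * u2 + s1 * u1 ≤ (1 + α) * (s1 + s2) := by
        nlinarith [mul_nonneg hs1n (sub_nonneg.2 hu1l), mul_nonneg hs2n (sub_nonneg.2 hu2l)]
      have key : (q2 - q1) * α * (s2 * u2 + s1 * u1)
          ≤ (s2 * u2 - s1 * u1) * (s2 * u2 + s1 * u1) := by
        have hid : (s2 * u2 - s1 * u1) * (s2 * u2 + s1 * u1)
            = (1 + α) * (q2 - q1) * (1 + (q1 + q2) * α) := by
          have e : (s2 * u2 - s1 * u1) * (s2 * u2 + s1 * u1)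
              = s2 ^ 2 * u2 ^ 2 - s1 ^ 2 * u1 ^ 2 := by ring
          rw [e, hs1, hs2, hu1, hu2]; ring
        rw [hid]
        have h1 : (q2 - q1) * α * (s2 * u2 + s1 * u1)
            ≤ (q2 - q1) * α * ((1 + α) * (s1 + s2)) :=
          mul_le_mul_of_nonneg_left hB (mul_nonneg (by linarith) hα0)
        have h2 : ((1 + α) * (q2 - q1)) * (α * (s1 + s2))
            ≤ ((1 + α) * (q2 - q1)) * (1 + (q1 + q2) * α) :=
          mul_le_mul_of_nonneg_left hA (mul_nonneg (by linarith) (by linarith))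
        calc (q2 - q1) * α * (s2 * u2 + s1 * u1)
            ≤ (q2 - q1) * α * ((1 + α) * (s1 + s2)) := h1
          _ = ((1 + α) * (q2 - q1)) * (α * (s1 + s2)) := by ring
          _ ≤ ((1 + α) * (q2 - q1)) * (1 + (q1 + q2) * α) := h2
          _ = (1 + α) * (q2 - q1) * (1 + (q1 + q2) * α) := by ring
      have hfin : (q2 - q1) * α ≤ s2 * u2 - s1 * u1 :=
        le_of_mul_le_mul_right key hP
      have e1 : s1 * (u1 - s1 * α) = s1 * u1 - q1 * α := by
        rw [← hs1]; ring
      have e2 : s2 * (u2 - s2 * α) = s2 * u2 - q2 * α := by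
        rw [← hs2]; ring
      rw [e1, e2]
      linarith
end
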